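/- Let u : ℝⁿ → ℝ be convex, and let S be a compact convex set with B₁(0) ⊂ S ⊂ B_R(0) such that u ≤ 0 on S and u = 0 on ∂S. If |u(x₀)| = m > 0 for some x₀ ∈ S with dist(x₀, ∂S) ≥ δ, then the subdifferential image satisfies ∂u(S) ⊇ conv(B_{m·δ/(2R²)}), where the ball is centered at the origin. -/

import Mathlib

open Set Metric

/-- The subdifferential of a real-valued convex function `u` at `z`. -/
def subdiffR (n : ℕ) (u : EuclideanSpace ℝ (Fin n) → ℝ)
    (z : EuclideanSpace ℝ (Fin n)) : Set (EuclideanSpace ℝ (Fin n)) :=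
  {p | ∀ x, u z + (inner ℝ p (x - z) : ℝ) ≤ u x}

/-- Cone-comparison lower bound on the subdifferential image: if `u` is convex, `S` is a
compact convex set with `B₁ ⊆ S ⊆ B_R`, `u ≤ 0` on `S`, `u = 0` on `∂S`, and `|u(x₀)| = m > 0`
at a point `x₀ ∈ S` with `dist(x₀, ∂S) ≥ δ`, then `∂u(S) ⊇ B_{mδ/(2R²)}(0)`. -/
theorem subdifferential_image_contains_ball
    (n : ℕ) (u : EuclideanSpace ℝ (Fin n) → ℝ) (hu : ConvexOn ℝ Set.univ u)
    (S : Set (EuclideanSpace ℝ (Fin n))) (hS : IsCompact S) (hSconv : Convex ℝ S)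
    (R : ℝ)
    (hB1 : ball (0 : EuclideanSpace ℝ (Fin n)) 1 ⊆ S)
    (hBR : S ⊆ ball (0 : EuclideanSpace ℝ (Fin n)) R)
    (hneg : ∀ x ∈ S, u x ≤ 0) (hzero : ∀ x ∈ frontier S, u x = 0)
    (x₀ : EuclideanSpace ℝ (Fin n)) (hx₀ : x₀ ∈ S)
    (δ m : ℝ) (hδ : 0 < δ) (hm : 0 < m)
    (hdist : δ ≤ infDist x₀ (frontier S)) (hval : |u x₀| = m) :
    ball (0 : EuclideanSpace ℝ (Fin n)) (m * δ / (2 * R ^ 2)) ⊆ ⋃ x ∈ S, subdiffR n u x := by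
  have hScl : IsClosed S := hS.isClosed
  have h0S : (0 : EuclideanSpace ℝ (Fin n)) ∈ S := hB1 (by simp [mem_ball])
  have hR : 0 < R := by simpa using hBR h0S
  -- `frontier S` is nonempty (otherwise `infDist = 0 < δ`)
  have hfr : (frontier S).Nonempty := by
    by_contra h
    rw [not_nonempty_iff_eq_empty] at h
    rw [h, infDist_empty] at hdist
    exact absurd (hδ.trans_le hdist) (lt_irrefl 0)
  -- `x₀` is in the interior of `S`
  have hx₀i : x₀ ∈ interior S := by
    have : x₀ ∉ frontier S := by
      intro hxf
      have : infDist x₀ (frontier S) = 0 := infDist_zero_of_mem hxf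
      rw [this] at hdist; exact absurd (hδ.trans_le hdist) (lt_irrefl 0)
    have hx₀c : x₀ ∈ closure S := subset_closure hx₀
    rcases (closure_eq_interior_union_frontier S ▸ hx₀c) with h | h
    · exact h
    · exact absurd h this
  -- the ball of radius δ around x₀ is contained in S
  have hballS : ball x₀ δ ⊆ S := by
    have hpre : IsPreconnected (ball x₀ δ) := (convex_ball x₀ δ).isPreconnected
    have hsub : ball x₀ δ ⊆ interior S ∪ (closure S)ᶜ := by
      intro y hy
      have hyf : y ∉ frontier S := by
        intro hyf
        have h' : infDist x₀ (frontier S) ≤ dist x₀ y := infDist_le_dist_of_mem hyf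
        have : δ ≤ dist x₀ y := hdist.trans h'
        exact absurd (mem_ball'.1 hy) (not_lt.2 this)
      by_cases hc : y ∈ closure S
      · left
        rcases (closure_eq_interior_union_frontier S ▸ hc) with h | h
        · exact h
        · exact absurd h hyf
      · right; exact hc
    have hdisj : Disjoint (interior S) (closure S)ᶜ :=
      Set.disjoint_compl_right_iff_subset.2 (interior_subset.trans subset_closure)
    have := hpre.subset_left_of_subset_union isOpen_interior
      (isClosed_closure.isOpen_compl) hdisj hsub ⟨x₀, mem_ball_self hδ, hx₀i⟩
    exact this.trans interior_subset
  -- hence δ ≤ R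
  have hδR : δ ≤ R := by
    obtain ⟨y, hy⟩ := hfr
    have hne : y ≠ x₀ := by
      intro h
      have := infDist_zero_of_mem (h ▸ hy)
      rw [this] at hdist; exact absurd (hδ.trans_le hdist) (lt_irrefl 0)
    have : Nontrivial (EuclideanSpace ℝ (Fin n)) := ⟨⟨y, x₀, hne⟩⟩
    obtain ⟨v, hv⟩ : ∃ v : EuclideanSpace ℝ (Fin n), ‖v‖ = 1 := exists_norm_eq (EuclideanSpace ℝ (Fin n)) (by norm_num)
    -- a direction that increases the norm of x₀
    obtain ⟨w, hw1, hw2⟩ : ∃ w : EuclideanSpace ℝ (Fin n), ‖w‖ = 1 ∧ ∀ t : ℝ, 0 ≤ t → ‖x₀ + t • w‖ = ‖x₀‖ + t := by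
      by_cases hx0 : x₀ = 0
      · exact ⟨v, hv, fun t ht => by simp [hx0, norm_smul, hv, abs_of_nonneg ht]⟩
      · refine ⟨‖x₀‖⁻¹ • x₀, by simp [norm_smul, inv_mul_cancel₀ (norm_ne_zero_iff.2 hx0)],
          fun t ht => ?_⟩
        have hx0' : (0:ℝ) < ‖x₀‖ := norm_pos_iff.2 hx0
        have : x₀ + t • ‖x₀‖⁻¹ • x₀ = (1 + t * ‖x₀‖⁻¹) • x₀ := by
          rw [add_smul, one_smul, smul_smul]
        rw [this, norm_smul, Real.norm_eq_abs, abs_of_nonneg (by positivity)]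
        field_simp
    have key : ∀ t : ℝ, 0 ≤ t → t < δ → ‖x₀‖ + t < R := by
      intro t ht htδ
      have : x₀ + t • w ∈ ball x₀ δ := by
        simp [mem_ball, dist_eq_norm, norm_smul, hw1, abs_of_nonneg ht, htδ]
      have := hBR (hballS this)
      rw [mem_ball, dist_eq_norm, sub_zero] at this
      rwa [hw2 t ht] at this
    by_contra hcon
    push_neg at hcon
    -- then R itself (or a value close to δ) gives a contradiction
    rcases lt_or_ge R δ with h | h
    · have hR2 : (0:ℝ) ≤ R := hR.le
      have := key R hR2 h
      have : R < R := lt_of_le_of_lt (by linarith [norm_nonneg x₀]) this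
      exact absurd this (lt_irrefl R)
    · exact absurd h (not_le.2 hcon)
  have hux₀ : u x₀ = -m := by
    have h1 := hneg x₀ hx₀
    rcases abs_cases (u x₀) with ⟨h, _⟩ | ⟨h, _⟩
    · rw [h] at hval; linarith
    · linarith [hval ▸ h]
  -- main argument
  intro p hp
  rw [mem_ball, dist_eq_norm, sub_zero] at hp
  -- the comparison function g
  set g : EuclideanSpace ℝ (Fin n) → ℝ := fun x => u x - inner ℝ p (x - x₀) with hg
  have hucont : ContinuousOn u S := by
    have : ContinuousOn u Set.univ := hu.continuousOn isOpen_univ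
    exact this.mono (subset_univ S)
  have hgcont : ContinuousOn g S := by
    apply hucont.sub
    exact (Continuous.inner continuous_const (continuous_id.sub continuous_const)).continuousOn
  obtain ⟨xb, hxbS, hxbmin⟩ := hS.exists_isMinOn ⟨0, h0S⟩ hgcont
  have hgxb : g xb ≤ -m := by
    have := hxbmin hx₀
    simpa [hg, hux₀] using this
  -- key inner product bound on the frontier
  have hfrb : ∀ x ∈ frontier S, (inner ℝ p (x - x₀) : ℝ) < m := by
    intro x hxf
    have hxS : x ∈ S := hScl.frontier_subset hxf
    have hxn : ‖x‖ < R := by simpa [mem_ball, dist_eq_norm] using hBR hxS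
    have hx₀n : ‖x₀‖ < R := by simpa [mem_ball, dist_eq_norm] using hBR hx₀
    have h1 : (inner ℝ p (x - x₀) : ℝ) ≤ ‖p‖ * ‖x - x₀‖ := real_inner_le_norm p _
    have h2 : ‖x - x₀‖ ≤ 2 * R := by
      calc ‖x - x₀‖ ≤ ‖x‖ + ‖x₀‖ := norm_sub_le _ _
        _ ≤ 2 * R := by linarith
    have h3 : ‖p‖ * ‖x - x₀‖ ≤ ‖p‖ * (2 * R) :=
      mul_le_mul_of_nonneg_left h2 (norm_nonneg p)
    have h4 : ‖p‖ * (2 * R) < m * δ / (2 * R ^ 2) * (2 * R) := by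
      apply mul_lt_mul_of_pos_right hp (by positivity)
    have h5 : m * δ / (2 * R ^ 2) * (2 * R) = m * δ / R := by
      field_simp
    have h6 : m * δ / R ≤ m := by
      rw [div_le_iff₀ hR]
      nlinarith
    linarith
  -- xb is not on the frontier, hence in the interior
  have hxbi : xb ∈ interior S := by
    have hxbf : xb ∉ frontier S := by
      intro hxf
      have := hfrb xb hxf
      have hgx : g xb = -(inner ℝ p (xb - x₀) : ℝ) := by simp [hg, hzero xb hxf]
      rw [hgx] at hgxb
      linarith
    rcases (closure_eq_interior_union_frontier S ▸ subset_closure hxbS) with h | h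
    · exact h
    · exact absurd h hxbf
  obtain ⟨ε, hε, hball⟩ := Metric.isOpen_iff.1 isOpen_interior xb hxbi
  -- p is a subgradient at xb
  refine mem_iUnion₂.2 ⟨xb, hxbS, ?_⟩
  intro y
  by_cases hy : y = xb
  · simp [hy]
  · have hd : (0:ℝ) < ‖y - xb‖ := by
      rw [norm_pos_iff]; exact sub_ne_zero.2 hy
    set t : ℝ := min 1 (ε / (2 * ‖y - xb‖)) with ht
    have ht0 : 0 < t := lt_min one_pos (by positivity)
    have ht1 : t ≤ 1 := min_le_left _ _
    set z : EuclideanSpace ℝ (Fin n) := xb + t • (y - xb) with hz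
    have hzS : z ∈ S := by
      have : dist z xb < ε := by
        rw [dist_eq_norm]
        have : z - xb = t • (y - xb) := by rw [hz]; abel
        rw [this, norm_smul, Real.norm_eq_abs, abs_of_pos ht0]
        calc t * ‖y - xb‖ ≤ ε / (2 * ‖y - xb‖) * ‖y - xb‖ :=
              mul_le_mul_of_nonneg_right (min_le_right _ _) hd.le
          _ = ε / 2 := by field_simp
          _ < ε := by linarith
      exact interior_subset (hball this)
    have hzcomb : z = (1 - t) • xb + t • y := by
      rw [hz, smul_sub, sub_smul, one_smul]; abel
    have hconv : u z ≤ (1 - t) * u xb + t * u y := by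
      have := hu.2 (mem_univ xb) (mem_univ y) (by linarith : (0:ℝ) ≤ 1 - t) ht0.le
        (by ring : (1 - t) + t = 1)
      rw [← hzcomb] at this
      exact this
    have hmin : g xb ≤ g z := hxbmin hzS
    have hinner : (inner ℝ p (z - x₀) : ℝ) =
        (inner ℝ p (xb - x₀) : ℝ) + t * (inner ℝ p (y - xb) : ℝ) := by
      have : z - x₀ = (xb - x₀) + t • (y - xb) := by rw [hz]; abel
      rw [this, inner_add_right, real_inner_smul_right]
    have key : u xb + t * (inner ℝ p (y - xb) : ℝ) ≤ u z := by
      have := hmin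
      simp only [hg] at this
      rw [hinner] at this
      linarith
    have : t * (u xb + (inner ℝ p (y - xb) : ℝ)) ≤ t * u y := by nlinarith
    have := le_of_mul_le_mul_left (by linarith : t * (u xb + (inner ℝ p (y - xb) : ℝ)) ≤ t * u y) ht0
    exact this
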